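/- Let g ≥ 2, d > 2g + 2c with 1 ≤ c ≤ g, and let b, s be integers with 0 ≤ b < c and 0 < c - b < s ≤ (d/(g+c))(c - b). Then (3/2)s + b(d - s - g + 1 - b) + c(s + b - c) < c(d + 1 - g) - c², i.e. the dimension bound on the destabilization parameter space is strictly smaller than the dimension of the Grassmannian Gr(c, H⁰(L)). -/
import Mathlib


/-- The dimension bound on the destabilization parameter space `D_{b,s}` is
strictly smaller than `dim Gr(c, H⁰(L)) = c(d+1-g) - c²`. -/
theorem stmt_3 (g c d b s : ℤ) (hg : 2 ≤ g) (hc1 : 1 ≤ c) (hcg : c ≤ g)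
    (hd : 2 * g + 2 * c < d) (hb0 : 0 ≤ b) (hbc : b < c)
    (h1 : 0 < c - b) (h2 : c - b < s)
    (h3 : (s : ℚ) ≤ ((d : ℚ) / ((g : ℚ) + c)) * ((c : ℚ) - b)) :
    (3 / 2 : ℚ) * s + (b : ℚ) * ((d : ℚ) - s - g + 1 - b) + (c : ℚ) * ((s : ℚ) + b - c)
      < (c : ℚ) * ((d : ℚ) + 1 - g) - (c : ℚ) ^ 2 := by
  have hgQ : (2 : ℚ) ≤ g := by exact_mod_cast hg
  have hcQ : (1 : ℚ) ≤ c := by exact_mod_cast hc1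
  have hbQ : (0 : ℚ) ≤ b := by exact_mod_cast hb0
  have h1Q : (0 : ℚ) < c - b := by exact_mod_cast h1
  have h2Q : (c : ℚ) - b < s := by exact_mod_cast h2
  have hdQ : 2 * (g : ℚ) + 2 * c < d := by exact_mod_cast hd
  have hgc : (0 : ℚ) < (g : ℚ) + c := by linarith
  have h3' : (s : ℚ) * ((g : ℚ) + c) ≤ (d : ℚ) * ((c : ℚ) - b) := by
    have := h3
    rw [div_mul_eq_mul_div, le_div_iff₀ hgc] at this
    linarith [this]
  nlinarith [mul_pos h1Q hgc, mul_le_mul_of_nonneg_left h3'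
      (by linarith : (0:ℚ) ≤ (c : ℚ) - b + 3/2),
    mul_nonneg (mul_nonneg h1Q.le (by linarith : (0:ℚ) ≤ (g:ℚ) + b - 3/2))
      (by linarith : (0:ℚ) ≤ (d:ℚ) - 2*g - 2*c),
    mul_nonneg (mul_nonneg h1Q.le hgc.le) (by linarith : (0:ℚ) ≤ (g:ℚ) + b - 2),
    mul_pos h1Q (by linarith : (0:ℚ) < (g:ℚ) + b - 3/2)]
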